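/- Every weakly reversible reaction network is endotactic: if a finite directed graph G embedded in R^d (with distinct vertices and edges e having source s(e), target t(e), and reaction vector v(e) = t(e) - s(e) ≠ 0) has the property that every edge lies on a directed cycle, then G is endotactic. -/
import Mathlib


/-- The dot product on `Fin d → ℝ`. -/
noncomputable def dotp {d : ℕ} (w u : Fin d → ℝ) : ℝ := ∑ i, w i * u i

/-- Endotactic reaction network, with reaction vectors `v e = t e - s e`. -/
def Endotactic {d : ℕ} {E : Type*} [Fintype E] (s t : E → (Fin d → ℝ)) : Prop :=
  ∀ w : Fin d → ℝ, ∀ ei : E, dotp w (t ei - s ei) < 0 →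
    ∃ ej : E, dotp w (s ej - s ei) < 0 ∧ 0 < dotp w (t ej - s ej)

/-- Weak reversibility: every edge is contained in a directed cycle of edges
`e = c 0, c 1, …, c n` where the target of each edge is the source of the next,
and the target of the last is the source of the first. -/
def WeaklyReversible {d : ℕ} {E : Type*} [Fintype E] (s t : E → (Fin d → ℝ)) : Prop :=
  ∀ e : E, ∃ (n : ℕ) (c : Fin (n + 1) → E), c 0 = e ∧
    (∀ i : Fin n, t (c i.castSucc) = s (c i.succ)) ∧ t (c (Fin.last n)) = s (c 0)

lemma dotp_sub {d : ℕ} (w a b : Fin d → ℝ) :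
    dotp w (a - b) = dotp w a - dotp w b := by
  simp [dotp, mul_sub, Finset.sum_sub_distrib]

/-- Every weakly reversible reaction network is endotactic. -/
theorem weaklyReversible_endotactic {d : ℕ} {E : Type*} [Fintype E]
    (s t : E → (Fin d → ℝ)) (hv : ∀ e, t e - s e ≠ 0)
    (h : WeaklyReversible s t) : Endotactic s t := by
  intro w ei hei
  obtain ⟨n, c, hc0, hstep, hlast⟩ := h ei
  -- every edge's target is the source of the (cyclically) next edge
  have hnext : ∀ i : Fin (n + 1), t (c i) = s (c (i + 1)) := by
    intro i
    refine Fin.lastCases ?_ ?_ i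
    · rw [Fin.last_add_one]; exact hlast
    · intro j
      have hcs : (j.castSucc) + 1 = j.succ := by
        ext; simp [Fin.val_add_one, Fin.ext_iff, Fin.castSucc_lt_last j]
      rw [hcs]; exact hstep j
  set f : Fin (n + 1) → ℝ := fun i => dotp w (s (c i)) with hfdef
  have hstepf : ∀ i : Fin (n + 1), f (i + 1) = f i + dotp w (t (c i) - s (c i)) := by
    intro i
    rw [dotp_sub, hnext i, hfdef]
    ring
  classical
  -- the set of global minimizers of f
  let S : Finset (Fin (n + 1)) := Finset.univ.filter (fun i => ∀ k, f i ≤ f k)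
  have hSne : S.Nonempty := by
    obtain ⟨j, _, hj⟩ := Finset.exists_min_image Finset.univ f ⟨0, Finset.mem_univ 0⟩
    refine ⟨j, ?_⟩
    simp only [S, Finset.mem_filter, Finset.mem_univ, true_and]
    exact fun k => hj k (Finset.mem_univ k)
  set j := S.max' hSne with hjdef
  have hjmin : ∀ k, f j ≤ f k := by
    have := S.max'_mem hSne
    simpa [S] using this
  -- f 1 < f 0 since the edge ei = c 0 decreases f
  have h1 : f (0 + 1) < f 0 := by
    have := hstepf 0
    rw [hc0] at this
    linarith
  have hj0 : f j < f 0 := lt_of_le_of_lt (hjmin (0 + 1)) h1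
  -- f strictly increases at j
  have hjsucc : f j < f (j + 1) := by
    by_cases hjl : j = Fin.last n
    · have hz : j + 1 = 0 := by rw [hjl]; exact Fin.last_add_one n
      rw [hz]; exact hj0
    · have hlt : j < j + 1 := by
        rw [Fin.lt_iff_val_lt_val, Fin.val_add_one, if_neg hjl]; omega
      have hnotmem : j + 1 ∉ S := fun hmem => absurd (S.le_max' _ hmem) (not_le.2 hlt)
      have hex : ∃ k, f k < f (j + 1) := by
        simp only [S, Finset.mem_filter, Finset.mem_univ, true_and, not_forall, not_le] at hnotmem
        exact hnotmem
      obtain ⟨k, hk⟩ := hex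
      exact lt_of_le_of_lt (hjmin k) hk
  refine ⟨c j, ?_, ?_⟩
  · rw [dotp_sub, ← hc0]
    have : f j - f 0 < 0 := by linarith
    simpa [hfdef] using this
  · have := hstepf j
    linarith
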